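/- Let r > 3/2 and tau >= 0. For functions f, g on T^3, the Gevrey seminorm of the product satisfies ||A^r e^{tau A}(f g)|| <= C_r (|\hat{f}_0| + ||A^r e^{tau A} f||)(|\hat{g}_0| + ||A^r e^{tau A} g||), where ||A^r e^{tau A} h||^2 = sum_k |k|^{2r} e^{2 tau |k|} |\hat{h}_k|^2 and \hat{h}_0 is the zero-mode Fourier coefficient. -/

import Mathlib

open scoped ENNReal

/-- Euclidean norm of a lattice frequency `k ∈ 2πℤ³`. -/
noncomputable def knorm3 (k : Fin 3 → ℤ) : ℝ :=
  Real.sqrt (∑ i, ((2 * Real.pi) * (k i : ℝ)) ^ 2)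

/-- The Gevrey/analytic seminorm `‖A^r e^{τA} f‖` of a function with Fourier coefficients `c`. -/
noncomputable def gevreySeminorm (τ r : ℝ) (c : (Fin 3 → ℤ) → ℂ) : ℝ≥0∞ :=
  (∑' k, ENNReal.ofReal
      ((knorm3 k) ^ (2 * r) * Real.exp (2 * τ * knorm3 k) * ‖c k‖ ^ 2)) ^ (1 / 2 : ℝ)

/-- Fourier coefficients of a product: convolution of the coefficients. -/
noncomputable def fconv (c d : (Fin 3 → ℤ) → ℂ) (k : Fin 3 → ℤ) : ℂ :=
  ∑' j, c j * d (k - j)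

section infra
open ENNReal MeasureTheory

theorem tsum_CS (f g : (Fin 3 → ℤ) → ℝ≥0∞) :
    ∑' i, f i * g i ≤ (∑' i, f i ^ (2:ℝ)) ^ (1/2:ℝ) * (∑' i, g i ^ (2:ℝ)) ^ (1/2:ℝ) := by
  have hc : Real.HolderConjugate 2 2 := Real.HolderConjugate.two_two
  have h := ENNReal.lintegral_mul_le_Lp_mul_Lq (Measure.count : Measure (Fin 3 → ℤ))
    hc (measurable_of_countable f).aemeasurable
    (measurable_of_countable g).aemeasurable
  simpa [lintegral_count, Pi.mul_apply] using h

theorem tsum_L2_add (f g : (Fin 3 → ℤ) → ℝ≥0∞) :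
    (∑' i, (f i + g i) ^ (2:ℝ)) ^ (1/2:ℝ)
      ≤ (∑' i, f i ^ (2:ℝ)) ^ (1/2:ℝ) + (∑' i, g i ^ (2:ℝ)) ^ (1/2:ℝ) := by
  have h := ENNReal.lintegral_Lp_add_le (p := 2) (μ := (Measure.count : Measure (Fin 3 → ℤ)))
    (measurable_of_countable f).aemeasurable (measurable_of_countable g).aemeasurable one_le_two
  simpa [lintegral_count, Pi.add_apply] using h

theorem epow_two (x : ℝ≥0∞) : x ^ (2:ℝ) = x * x := by
  rw [show ((2:ℝ)) = ((2:ℕ):ℝ) by norm_num, ENNReal.rpow_natCast, pow_two]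

theorem rpow_half_sq (x : ℝ≥0∞) : (x ^ (1/2:ℝ)) ^ (2:ℝ) = x := by
  rw [← ENNReal.rpow_mul]; norm_num

theorem rpow_half_mul_self (x : ℝ≥0∞) : x ^ (1/2:ℝ) * x ^ (1/2:ℝ) = x := by
  rw [← epow_two, rpow_half_sq]

theorem mul_self_rpow_half (x : ℝ≥0∞) : (x * x) ^ (1/2:ℝ) = x := by
  rw [← epow_two, ← ENNReal.rpow_mul]; norm_num

theorem sq_rpow_half (x : ℝ≥0∞) : (x ^ (2:ℝ)) ^ (1/2:ℝ) = x := by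
  rw [← ENNReal.rpow_mul]; norm_num

theorem tsum_young (f g : (Fin 3 → ℤ) → ℝ≥0∞) :
    (∑' k, (∑' j, f j * g (k - j)) ^ (2:ℝ)) ^ (1/2:ℝ)
      ≤ (∑' j, f j ^ (2:ℝ)) ^ (1/2:ℝ) * ∑' j, g j := by
  have hshiftL : ∀ k : Fin 3 → ℤ, ∑' j, g (k - j) = ∑' j, g j := fun k => by
    simpa using (Equiv.subLeft k).tsum_eq g
  have hshiftR : ∀ j : Fin 3 → ℤ, ∑' k, g (k - j) = ∑' m, g m := fun j => by
    simpa using (Equiv.subRight j).tsum_eq g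
  have key : ∀ k, (∑' j, f j * g (k - j)) ^ (2:ℝ)
      ≤ (∑' j, f j ^ (2:ℝ) * g (k - j)) * ∑' j, g j := by
    intro k
    have h1 : ∑' j, f j * g (k - j)
        ≤ (∑' j, f j ^ (2:ℝ) * g (k - j)) ^ (1/2:ℝ) * (∑' j, g (k - j)) ^ (1/2:ℝ) := by
      have hcs := tsum_CS (fun j => f j * (g (k - j)) ^ (1/2:ℝ)) (fun j => (g (k - j)) ^ (1/2:ℝ))
      calc ∑' j, f j * g (k - j)
          = ∑' j, (f j * (g (k - j)) ^ (1/2:ℝ)) * (g (k - j)) ^ (1/2:ℝ) := by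
            refine tsum_congr fun j => ?_
            rw [mul_assoc, rpow_half_mul_self]
        _ ≤ (∑' j, (f j * (g (k - j)) ^ (1/2:ℝ)) ^ (2:ℝ)) ^ (1/2:ℝ)
            * (∑' j, ((g (k - j)) ^ (1/2:ℝ)) ^ (2:ℝ)) ^ (1/2:ℝ) := hcs
        _ = (∑' j, f j ^ (2:ℝ) * g (k - j)) ^ (1/2:ℝ) * (∑' j, g (k - j)) ^ (1/2:ℝ) := by
            congr 2
            · exact tsum_congr fun j => by
                rw [ENNReal.mul_rpow_of_nonneg _ _ (by norm_num : (0:ℝ) ≤ 2), rpow_half_sq]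
            · exact tsum_congr fun j => rpow_half_sq _
    calc (∑' j, f j * g (k - j)) ^ (2:ℝ)
        ≤ ((∑' j, f j ^ (2:ℝ) * g (k - j)) ^ (1/2:ℝ) * (∑' j, g (k - j)) ^ (1/2:ℝ)) ^ (2:ℝ) :=
          ENNReal.rpow_le_rpow h1 (by norm_num)
      _ = (∑' j, f j ^ (2:ℝ) * g (k - j)) * ∑' j, g (k - j) := by
          rw [ENNReal.mul_rpow_of_nonneg _ _ (by norm_num : (0:ℝ) ≤ 2), rpow_half_sq, rpow_half_sq]
      _ = (∑' j, f j ^ (2:ℝ) * g (k - j)) * ∑' j, g j := by rw [hshiftL]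
  calc (∑' k, (∑' j, f j * g (k - j)) ^ (2:ℝ)) ^ (1/2:ℝ)
      ≤ (∑' k, (∑' j, f j ^ (2:ℝ) * g (k - j)) * ∑' j, g j) ^ (1/2:ℝ) :=
        ENNReal.rpow_le_rpow (ENNReal.tsum_le_tsum key) (by norm_num)
    _ = ((∑' j, f j ^ (2:ℝ)) * (∑' j, g j) * ∑' j, g j) ^ (1/2:ℝ) := by
        rw [ENNReal.tsum_mul_right]
        congr 2
        rw [ENNReal.tsum_comm]
        rw [show (∑' (j) (k : Fin 3 → ℤ), f j ^ (2:ℝ) * g (k - j))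
            = ∑' j, f j ^ (2:ℝ) * ∑' m, g m from
          tsum_congr fun j => by rw [ENNReal.tsum_mul_left, hshiftR]]
        rw [ENNReal.tsum_mul_right]
    _ = (∑' j, f j ^ (2:ℝ)) ^ (1/2:ℝ) * ∑' j, g j := by
        rw [mul_assoc, ENNReal.mul_rpow_of_nonneg _ _ (by norm_num : (0:ℝ) ≤ 1/2),
          mul_self_rpow_half]


theorem knorm3_nonneg (k : Fin 3 → ℤ) : 0 ≤ knorm3 k := Real.sqrt_nonneg _

theorem knorm3_zero : knorm3 0 = 0 := by
  simp [knorm3]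

/-- knorm3 as the norm of a vector in EuclideanSpace. -/
noncomputable def kvec (k : Fin 3 → ℤ) : EuclideanSpace ℝ (Fin 3) :=
  WithLp.toLp 2 (fun i => (2 * Real.pi) * (k i : ℝ))

theorem knorm3_eq_norm (k : Fin 3 → ℤ) : knorm3 k = ‖kvec k‖ := by
  rw [EuclideanSpace.norm_eq]
  unfold knorm3 kvec
  congr 1
  refine Finset.sum_congr rfl fun i _ => ?_
  rw [Real.norm_eq_abs, sq_abs]

theorem kvec_add (x y : Fin 3 → ℤ) : kvec (x + y) = kvec x + kvec y := by
  ext i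
  simp only [kvec, PiLp.add_apply, Pi.add_apply]
  push_cast
  ring

theorem knorm3_triangle (x y : Fin 3 → ℤ) : knorm3 (x + y) ≤ knorm3 x + knorm3 y := by
  rw [knorm3_eq_norm, knorm3_eq_norm, knorm3_eq_norm, kvec_add]
  exact norm_add_le _ _

theorem abs_coord_le_knorm3 (j : Fin 3 → ℤ) (i : Fin 3) : |(j i : ℝ)| ≤ knorm3 j := by
  have h1 : ((2 * Real.pi) * (j i : ℝ)) ^ 2 ≤ ∑ i', ((2 * Real.pi) * (j i' : ℝ)) ^ 2 :=
    Finset.single_le_sum (f := fun i' => ((2 * Real.pi) * (j i' : ℝ)) ^ 2) (fun i' _ => sq_nonneg _) (Finset.mem_univ i)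
  have h2 : |(2 * Real.pi) * (j i : ℝ)| ≤ knorm3 j := by
    rw [← Real.sqrt_sq_eq_abs]
    exact Real.sqrt_le_sqrt h1
  have h3 : |(j i : ℝ)| ≤ |(2 * Real.pi) * (j i : ℝ)| := by
    rw [abs_mul]
    have h4 : (1:ℝ) ≤ |2 * Real.pi| := by
      rw [abs_of_pos (by positivity)]
      nlinarith [Real.pi_gt_three]
    nlinarith [abs_nonneg ((j i : ℝ))]
  linarith

theorem one_le_knorm3 (j : Fin 3 → ℤ) (hj : j ≠ 0) : 1 ≤ knorm3 j := by
  obtain ⟨i, hi⟩ : ∃ i, j i ≠ 0 := by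
    by_contra h
    push_neg at h
    exact hj (funext h)
  have h1 : (1:ℝ) ≤ |(j i : ℝ)| := by
    rw [← Int.cast_abs]
    exact_mod_cast Int.one_le_abs hi
  linarith [abs_coord_le_knorm3 j i]

theorem max_coord_le_knorm3 (j : Fin 3 → ℤ) (hj : j ≠ 0) (i : Fin 3) :
    max 1 |(j i : ℝ)| ≤ knorm3 j :=
  max_le (one_le_knorm3 j hj) (abs_coord_le_knorm3 j i)

/-- An explicit equivalence `(Fin 3 → ℤ) ≃ ℤ × ℤ × ℤ`. -/
def eT3 : (Fin 3 → ℤ) ≃ ℤ × ℤ × ℤ where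
  toFun j := (j 0, j 1, j 2)
  invFun p := ![p.1, p.2.1, p.2.2]
  left_inv j := by funext i; fin_cases i <;> rfl
  right_inv p := rfl

theorem tsum_int_max_lt_top (q : ℝ) (hq : 1 < q) :
    ∑' n : ℤ, ENNReal.ofReal ((max 1 |(n:ℝ)|) ^ (-q)) < ⊤ := by
  have hb : ∀ n : ℤ, ENNReal.ofReal ((max 1 |(n:ℝ)|) ^ (-q))
      ≤ ENNReal.ofReal (|(n:ℝ)| ^ (-q)) + (if n = 0 then 1 else 0) := by
    intro n
    by_cases hn : n = 0
    · subst hn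
      simp [Real.one_rpow]
    · have h1 : (1:ℝ) ≤ |(n:ℝ)| := by
        rw [← Int.cast_abs]; exact_mod_cast Int.one_le_abs hn
      rw [max_eq_right h1, if_neg hn, add_zero]
  calc ∑' n : ℤ, ENNReal.ofReal ((max 1 |(n:ℝ)|) ^ (-q))
      ≤ ∑' n : ℤ, (ENNReal.ofReal (|(n:ℝ)| ^ (-q)) + (if n = 0 then 1 else 0)) :=
        ENNReal.tsum_le_tsum hb
    _ = (∑' n : ℤ, ENNReal.ofReal (|(n:ℝ)| ^ (-q))) + ∑' n : ℤ, (if n = 0 then (1:ℝ≥0∞) else 0) :=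
        ENNReal.tsum_add
    _ < ⊤ := by
        have hsum : Summable fun n : ℤ => |(n:ℝ)| ^ (-q) := Real.summable_abs_int_rpow hq
        rw [← ENNReal.ofReal_tsum_of_nonneg (fun n => Real.rpow_nonneg (abs_nonneg _) _) hsum]
        have : ∑' n : ℤ, (if n = 0 then (1:ℝ≥0∞) else 0) = 1 := tsum_ite_eq (0:ℤ) 1
        rw [this]
        exact ENNReal.add_lt_top.2 ⟨ENNReal.ofReal_lt_top, one_lt_top⟩

theorem lattice_sum_lt_top (r : ℝ) (hr : 3/2 < r) :
    ∑' j : Fin 3 → ℤ,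
      ENNReal.ofReal (if j = 0 then 1 else knorm3 j ^ (-(2*r))) < ⊤ := by
  set q : ℝ := 2*r/3 with hq
  have hq1 : 1 < q := by rw [hq]; linarith
  set g : ℤ → ℝ≥0∞ := fun n => ENNReal.ofReal ((max 1 |(n:ℝ)|) ^ (-q)) with hg
  have hbound : ∀ j : Fin 3 → ℤ,
      ENNReal.ofReal (if j = 0 then 1 else knorm3 j ^ (-(2*r)))
        ≤ g (j 0) * g (j 1) * g (j 2) := by
    intro j
    by_cases hj : j = 0
    · subst hj
      simp [hg, Real.one_rpow]
    · rw [if_neg hj]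
      have hm : ∀ i, (1:ℝ) ≤ max 1 |(j i : ℝ)| := fun i => le_max_left _ _
      have hkn : (1:ℝ) ≤ knorm3 j := one_le_knorm3 j hj
      have hprod : (max 1 |(j 0 : ℝ)|) * (max 1 |(j 1 : ℝ)|) * (max 1 |(j 2 : ℝ)|)
          ≤ knorm3 j * knorm3 j * knorm3 j := by
        have h0 := max_coord_le_knorm3 j hj 0
        have h1 := max_coord_le_knorm3 j hj 1
        have h2 := max_coord_le_knorm3 j hj 2
        have hkn0 : (0:ℝ) ≤ knorm3 j := knorm3_nonneg j
        have e0 := hm 0; have e1 := hm 1; have e2 := hm 2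
        have : (max 1 |(j 0 : ℝ)|) * (max 1 |(j 1 : ℝ)|) ≤ knorm3 j * knorm3 j :=
          mul_le_mul h0 h1 (by linarith) hkn0
        exact mul_le_mul this h2 (by linarith) (by positivity)
    -- knorm3 j ^ (-(2r)) ≤ (m0*m1*m2) ^ (-q) = m0^(-q) * m1^(-q) * m2^(-q)
      have hstep : knorm3 j ^ (-(2*r))
          ≤ ((max 1 |(j 0 : ℝ)|) * (max 1 |(j 1 : ℝ)|) * (max 1 |(j 2 : ℝ)|)) ^ (-q) := by
        have h1 : knorm3 j ^ (-(2*r)) = (knorm3 j * knorm3 j * knorm3 j) ^ (-q) := by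
          rw [show knorm3 j * knorm3 j * knorm3 j = knorm3 j ^ (3:ℕ) by ring,
            ← Real.rpow_natCast (knorm3 j) 3, ← Real.rpow_mul (knorm3_nonneg j)]
          norm_num
          ring_nf
          rw [hq]; ring_nf
        rw [h1]
        refine Real.rpow_le_rpow_of_nonpos ?_ hprod (by linarith)
        positivity
      have hmul : ((max 1 |(j 0 : ℝ)|) * (max 1 |(j 1 : ℝ)|) * (max 1 |(j 2 : ℝ)|)) ^ (-q)
          = (max 1 |(j 0 : ℝ)|) ^ (-q) * (max 1 |(j 1 : ℝ)|) ^ (-q)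
            * (max 1 |(j 2 : ℝ)|) ^ (-q) := by
        rw [Real.mul_rpow (by positivity) (by positivity),
          Real.mul_rpow (by positivity) (by positivity)]
      calc ENNReal.ofReal (knorm3 j ^ (-(2*r)))
          ≤ ENNReal.ofReal ((max 1 |(j 0 : ℝ)|) ^ (-q) * (max 1 |(j 1 : ℝ)|) ^ (-q)
              * (max 1 |(j 2 : ℝ)|) ^ (-q)) := by
            refine ENNReal.ofReal_le_ofReal ?_
            rw [← hmul]; exact hstep
        _ = g (j 0) * g (j 1) * g (j 2) := by
            rw [hg]
            rw [ENNReal.ofReal_mul (by positivity), ENNReal.ofReal_mul (by positivity)]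
  have hfactor : ∑' j : Fin 3 → ℤ, g (j 0) * g (j 1) * g (j 2)
      = (∑' n, g n) * (∑' n, g n) * (∑' n, g n) := by
    have he : ∑' j : Fin 3 → ℤ, g (j 0) * g (j 1) * g (j 2)
        = ∑' p : ℤ × ℤ × ℤ, g p.1 * g p.2.1 * g p.2.2 := by
      exact (Equiv.tsum_eq eT3.symm fun j => g (j 0) * g (j 1) * g (j 2)).symm
    rw [he, ENNReal.tsum_prod']
    calc ∑' (a : ℤ) (p : ℤ × ℤ), g a * g p.1 * g p.2
        = ∑' (a : ℤ), g a * ∑' p : ℤ × ℤ, g p.1 * g p.2 := by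
          refine tsum_congr fun a => ?_
          rw [← ENNReal.tsum_mul_left]
          exact tsum_congr fun p => by ring
      _ = (∑' n, g n) * ∑' p : ℤ × ℤ, g p.1 * g p.2 := ENNReal.tsum_mul_right
      _ = (∑' n, g n) * ((∑' n, g n) * (∑' n, g n)) := by
          congr 1
          rw [ENNReal.tsum_prod']
          calc ∑' (a : ℤ) (b : ℤ), g a * g b = ∑' (a : ℤ), g a * ∑' b, g b := by
                exact tsum_congr fun a => ENNReal.tsum_mul_left
            _ = (∑' n, g n) * (∑' n, g n) := ENNReal.tsum_mul_right
      _ = (∑' n, g n) * (∑' n, g n) * (∑' n, g n) := by ring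
  have hZ : ∑' n, g n < ⊤ := tsum_int_max_lt_top q hq1
  calc ∑' j : Fin 3 → ℤ, ENNReal.ofReal (if j = 0 then 1 else knorm3 j ^ (-(2*r)))
      ≤ ∑' j : Fin 3 → ℤ, g (j 0) * g (j 1) * g (j 2) := ENNReal.tsum_le_tsum hbound
    _ = (∑' n, g n) * (∑' n, g n) * (∑' n, g n) := hfactor
    _ < ⊤ := by
        exact ENNReal.mul_lt_top (ENNReal.mul_lt_top hZ hZ) hZ

end infra


section main

open ENNReal

/-- Seminorm product estimate for `r > 3/2`:
`‖A^r e^{τA}(fg)‖ ≤ C_r (|f̂₀| + ‖A^r e^{τA} f‖)(|ĝ₀| + ‖A^r e^{τA} g‖)`. -/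
theorem gevrey_seminorm_product (r : ℝ) (hr : 3 / 2 < r) :
    ∃ C : ℝ, 0 < C ∧ ∀ τ : ℝ, 0 ≤ τ → ∀ c d : (Fin 3 → ℤ) → ℂ,
      gevreySeminorm τ r c < ⊤ → gevreySeminorm τ r d < ⊤ →
      gevreySeminorm τ r (fconv c d)
        ≤ ENNReal.ofReal C * (ENNReal.ofReal ‖c 0‖ + gevreySeminorm τ r c)
            * (ENNReal.ofReal ‖d 0‖ + gevreySeminorm τ r d) := by
  have hr0 : (0:ℝ) < r := by linarith
  -- the lattice constant
  set S : ℝ≥0∞ := ∑' j : Fin 3 → ℤ,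
      ENNReal.ofReal (if j = 0 then 1 else knorm3 j ^ (-(2*r))) with hS_def
  have hS : S < ⊤ := lattice_sum_lt_top r hr
  set S2 : ℝ≥0∞ := S ^ (1/2:ℝ) with hS2_def
  have hS2 : S2 ≠ ⊤ := by
    rw [hS2_def]
    exact (ENNReal.rpow_lt_top_of_nonneg (by norm_num) hS.ne).ne
  refine ⟨2 * (2:ℝ)^r * (S2.toReal + 1), by positivity, ?_⟩
  intro τ hτ c d _ _
  -- weights
  set W : (Fin 3 → ℤ) → ℝ≥0∞ :=
    fun k => ENNReal.ofReal (knorm3 k ^ r * Real.exp (τ * knorm3 k)) with hW_def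
  set E : (Fin 3 → ℤ) → ℝ≥0∞ :=
    fun k => ENNReal.ofReal (Real.exp (τ * knorm3 k)) with hE_def
  set v : (Fin 3 → ℤ) → ℝ≥0∞ :=
    fun j => ENNReal.ofReal (if j = 0 then 1 else knorm3 j ^ (-r)) with hv_def
  -- basic identities
  have hE0 : E 0 = 1 := by
    rw [hE_def]; simp [knorm3_zero]
  have hW0 : W 0 = 0 := by
    rw [hW_def]; simp [knorm3_zero, Real.zero_rpow hr0.ne']
  have hv0 : v 0 = 1 := by rw [hv_def]; simp
  -- gevreySeminorm as an L² norm
  have hgev : ∀ e : (Fin 3 → ℤ) → ℂ, gevreySeminorm τ r e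
      = (∑' k, (W k * ENNReal.ofReal ‖e k‖) ^ (2:ℝ)) ^ (1/2:ℝ) := by
    intro e
    unfold gevreySeminorm
    congr 1
    refine tsum_congr fun k => ?_
    have hre : knorm3 k ^ (2*r) * Real.exp (2*τ*knorm3 k) * ‖e k‖ ^ 2
        = (knorm3 k ^ r * Real.exp (τ * knorm3 k) * ‖e k‖) ^ 2 := by
      rw [mul_pow, mul_pow]
      congr 2
      · rw [← Real.rpow_natCast (knorm3 k ^ r) 2, ← Real.rpow_mul (knorm3_nonneg k)]
        norm_num
        ring_nf
      · rw [sq, ← Real.exp_add]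
        ring_nf
    have h1 : 0 ≤ knorm3 k ^ r * Real.exp (τ * knorm3 k) :=
      mul_nonneg (Real.rpow_nonneg (knorm3_nonneg k) r) (Real.exp_pos _).le
    rw [hre, hW_def]
    rw [show ((2:ℝ)) = ((2:ℕ):ℝ) by norm_num, ENNReal.rpow_natCast,
      ← ENNReal.ofReal_mul h1, ← ENNReal.ofReal_pow (mul_nonneg h1 (norm_nonneg _))]
  -- coefficient sequences
  set nc : (Fin 3 → ℤ) → ℝ≥0∞ := fun k => ENNReal.ofReal ‖c k‖ with hnc_def
  set nd : (Fin 3 → ℤ) → ℝ≥0∞ := fun k => ENNReal.ofReal ‖d k‖ with hnd_def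
  set a : (Fin 3 → ℤ) → ℝ≥0∞ := fun k => W k * nc k with ha_def
  set b : (Fin 3 → ℤ) → ℝ≥0∞ := fun k => W k * nd k with hb_def
  set a' : (Fin 3 → ℤ) → ℝ≥0∞ := fun k => E k * nc k with ha'_def
  set b' : (Fin 3 → ℤ) → ℝ≥0∞ := fun k => E k * nd k with hb'_def
  set L2a : ℝ≥0∞ := (∑' k, a k ^ (2:ℝ)) ^ (1/2:ℝ) with hL2a_def
  set L2b : ℝ≥0∞ := (∑' k, b k ^ (2:ℝ)) ^ (1/2:ℝ) with hL2b_def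
  -- the subadditivity of the weight
  have hWsub : ∀ x y : Fin 3 → ℤ,
      W (x + y) ≤ ENNReal.ofReal ((2:ℝ)^r) * (W x * E y + E x * W y) := by
    intro x y
    rw [hW_def, hE_def]
    simp only
    have hWx : 0 ≤ knorm3 x ^ r * Real.exp (τ * knorm3 x) :=
      mul_nonneg (Real.rpow_nonneg (knorm3_nonneg x) r) (Real.exp_pos _).le
    have hWy : 0 ≤ knorm3 y ^ r * Real.exp (τ * knorm3 y) :=
      mul_nonneg (Real.rpow_nonneg (knorm3_nonneg y) r) (Real.exp_pos _).le
    have hEx : (0:ℝ) ≤ Real.exp (τ * knorm3 x) := (Real.exp_pos _).le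
    rw [← ENNReal.ofReal_mul hWx, ← ENNReal.ofReal_mul hEx,
      ← ENNReal.ofReal_add (mul_nonneg hWx (Real.exp_pos _).le) (mul_nonneg hEx hWy),
      ← ENNReal.ofReal_mul (by positivity : (0:ℝ) ≤ (2:ℝ)^r)]
    refine ENNReal.ofReal_le_ofReal ?_
    set s := knorm3 x
    set t := knorm3 y
    set m := knorm3 (x + y)
    have hs : 0 ≤ s := knorm3_nonneg x
    have ht : 0 ≤ t := knorm3_nonneg y
    have hm : 0 ≤ m := knorm3_nonneg (x + y)
    have hmst : m ≤ s + t := knorm3_triangle x y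
    have hexp : Real.exp (τ * m) ≤ Real.exp (τ * s) * Real.exp (τ * t) := by
      rw [← Real.exp_add, ← mul_add]
      exact Real.exp_le_exp.2 (mul_le_mul_of_nonneg_left hmst hτ)
    have hpow : m ^ r ≤ (2:ℝ)^r * (s ^ r + t ^ r) := by
      have h1 : m ^ r ≤ (s + t) ^ r := Real.rpow_le_rpow hm hmst hr0.le
      have h2 : (s + t) ^ r ≤ (2:ℝ)^r * (s ^ r + t ^ r) := by
        rcases le_total s t with h | h
        · calc (s + t) ^ r ≤ (2 * t) ^ r :=
              Real.rpow_le_rpow (by linarith) (by linarith) hr0.le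
            _ = (2:ℝ)^r * t ^ r := Real.mul_rpow (by norm_num) ht
            _ ≤ (2:ℝ)^r * (s ^ r + t ^ r) := by
                have h1 : (0:ℝ) ≤ s ^ r := Real.rpow_nonneg hs r
                have h2r : (0:ℝ) ≤ (2:ℝ)^r := by positivity
                nlinarith [mul_nonneg h2r h1]
        · calc (s + t) ^ r ≤ (2 * s) ^ r :=
              Real.rpow_le_rpow (by linarith) (by linarith) hr0.le
            _ = (2:ℝ)^r * s ^ r := Real.mul_rpow (by norm_num) hs
            _ ≤ (2:ℝ)^r * (s ^ r + t ^ r) := by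
                have h1 : (0:ℝ) ≤ t ^ r := Real.rpow_nonneg ht r
                have h2r : (0:ℝ) ≤ (2:ℝ)^r := by positivity
                nlinarith [mul_nonneg h2r h1]
      linarith
    calc m ^ r * Real.exp (τ * m)
        ≤ ((2:ℝ)^r * (s ^ r + t ^ r)) * (Real.exp (τ * s) * Real.exp (τ * t)) := by
          refine mul_le_mul hpow hexp (Real.exp_pos _).le ?_
          positivity
      _ = (2:ℝ)^r * (s ^ r * Real.exp (τ * s) * Real.exp (τ * t)
            + Real.exp (τ * s) * (t ^ r * Real.exp (τ * t))) := by ring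
  -- pointwise bound on the convolution weight
  have hptwise : ∀ k : Fin 3 → ℤ, W k * ENNReal.ofReal ‖fconv c d k‖
      ≤ ENNReal.ofReal ((2:ℝ)^r)
        * ((∑' j, a j * b' (k - j)) + ∑' j, a' j * b (k - j)) := by
    intro k
    have hnorm : ENNReal.ofReal ‖fconv c d k‖ ≤ ∑' j, nc j * nd (k - j) := by
      by_cases hsum : Summable fun j => ‖c j * d (k - j)‖
      · calc ENNReal.ofReal ‖fconv c d k‖
            ≤ ENNReal.ofReal (∑' j, ‖c j * d (k - j)‖) :=
              ENNReal.ofReal_le_ofReal (norm_tsum_le_tsum_norm hsum)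
          _ = ∑' j, ENNReal.ofReal ‖c j * d (k - j)‖ :=
              ENNReal.ofReal_tsum_of_nonneg (fun j => norm_nonneg _) hsum
          _ = ∑' j, nc j * nd (k - j) := by
              refine tsum_congr fun j => ?_
              rw [norm_mul, ENNReal.ofReal_mul (norm_nonneg _)]
      · have : ¬ Summable fun j => c j * d (k - j) := by
          rw [← summable_norm_iff]; exact hsum
        rw [fconv, tsum_eq_zero_of_not_summable this]
        simp
    calc W k * ENNReal.ofReal ‖fconv c d k‖
        ≤ W k * ∑' j, nc j * nd (k - j) := mul_le_mul_right hnorm _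
      _ = ∑' j, W k * (nc j * nd (k - j)) := ENNReal.tsum_mul_left.symm
      _ ≤ ∑' j, ENNReal.ofReal ((2:ℝ)^r) * (a j * b' (k - j) + a' j * b (k - j)) := by
          refine ENNReal.tsum_le_tsum fun j => ?_
          have hk : j + (k - j) = k := by abel
          have := hWsub j (k - j)
          rw [hk] at this
          calc W k * (nc j * nd (k - j))
              ≤ (ENNReal.ofReal ((2:ℝ)^r) * (W j * E (k - j) + E j * W (k - j)))
                * (nc j * nd (k - j)) := mul_le_mul_left this _
            _ = ENNReal.ofReal ((2:ℝ)^r) * (a j * b' (k - j) + a' j * b (k - j)) := by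
                rw [ha_def, hb_def, ha'_def, hb'_def]
                ring
      _ = ENNReal.ofReal ((2:ℝ)^r)
          * ((∑' j, a j * b' (k - j)) + ∑' j, a' j * b (k - j)) := by
          rw [ENNReal.tsum_mul_left, ENNReal.tsum_add]
  -- ℓ¹ bounds on a' and b'
  have hL1 : ∀ (e : (Fin 3 → ℤ) → ℂ),
      (∑' j, E j * ENNReal.ofReal ‖e j‖)
        ≤ S2 * (ENNReal.ofReal ‖e 0‖ + (∑' k, (W k * ENNReal.ofReal ‖e k‖) ^ (2:ℝ)) ^ (1/2:ℝ)) := by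
    intro e
    set ne' : (Fin 3 → ℤ) → ℝ≥0∞ := fun k => ENNReal.ofReal ‖e k‖ with hne_def
    set δ : (Fin 3 → ℤ) → ℝ≥0∞ := fun j => if j = 0 then ne' 0 else 0 with hδ_def
    have hpt : ∀ j, E j * ne' j ≤ v j * (W j * ne' j + δ j) := by
      intro j
      by_cases hj : j = 0
      · subst hj
        rw [hδ_def, hv0, hE0]
        simp only [if_pos rfl]
        rw [one_mul, one_mul]
        exact le_add_self
      · have hkn : (0:ℝ) < knorm3 j := lt_of_lt_of_le one_pos (one_le_knorm3 j hj)
        have hid : v j * (W j * ne' j + δ j) = E j * ne' j := by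
          simp only [hv_def, hW_def, hE_def, hδ_def, if_neg hj, add_zero]
          rw [← mul_assoc, ← ENNReal.ofReal_mul (Real.rpow_nonneg (knorm3_nonneg j) _),
            ← mul_assoc, ← Real.rpow_add hkn]
          norm_num
        rw [hid]
    have hv2 : ∀ j, v j ^ (2:ℝ) = ENNReal.ofReal (if j = 0 then 1 else knorm3 j ^ (-(2*r))) := by
      intro j
      rw [hv_def]
      simp only
      rw [show ((2:ℝ)) = ((2:ℕ):ℝ) by norm_num, ENNReal.rpow_natCast,
        ← ENNReal.ofReal_pow (by
          split_ifs with h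
          · norm_num
          · exact Real.rpow_nonneg (knorm3_nonneg j) _)]
      congr 1
      by_cases hj : j = 0
      · simp [hj]
      · simp only [if_neg hj]
        rw [← Real.rpow_natCast (knorm3 j ^ (-r)) 2, ← Real.rpow_mul (knorm3_nonneg j)]
        norm_num
        ring_nf
    have hδ2 : (∑' j, δ j ^ (2:ℝ)) ^ (1/2:ℝ) = ne' 0 := by
      have : ∀ j, δ j ^ (2:ℝ) = (if j = 0 then ne' 0 ^ (2:ℝ) else 0) := by
        intro j
        rw [hδ_def]
        by_cases hj : j = 0 <;> simp [hj, ENNReal.zero_rpow_of_pos (by norm_num : (0:ℝ) < 2)]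
      rw [tsum_congr this, tsum_ite_eq (0 : Fin 3 → ℤ) (fun _ => ne' 0 ^ (2:ℝ)), ← ENNReal.rpow_mul]
      norm_num
    calc ∑' j, E j * ne' j
        ≤ ∑' j, v j * (W j * ne' j + δ j) := ENNReal.tsum_le_tsum hpt
      _ ≤ (∑' j, v j ^ (2:ℝ)) ^ (1/2:ℝ)
          * (∑' j, (W j * ne' j + δ j) ^ (2:ℝ)) ^ (1/2:ℝ) := tsum_CS _ _
      _ ≤ S2 * (ne' 0 + (∑' k, (W k * ne' k) ^ (2:ℝ)) ^ (1/2:ℝ)) := by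
          refine mul_le_mul' ?_ ?_
          · rw [hS2_def, hS_def]
            exact le_of_eq (by rw [tsum_congr hv2])
          · calc (∑' j, (W j * ne' j + δ j) ^ (2:ℝ)) ^ (1/2:ℝ)
                ≤ (∑' j, (W j * ne' j) ^ (2:ℝ)) ^ (1/2:ℝ) + (∑' j, δ j ^ (2:ℝ)) ^ (1/2:ℝ) :=
                  tsum_L2_add _ _
              _ = (∑' k, (W k * ne' k) ^ (2:ℝ)) ^ (1/2:ℝ) + ne' 0 := by rw [hδ2]
              _ = ne' 0 + (∑' k, (W k * ne' k) ^ (2:ℝ)) ^ (1/2:ℝ) := add_comm _ _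
  -- assemble
  have hgc : gevreySeminorm τ r c = L2a := by rw [hgev c, hL2a_def]
  have hgd : gevreySeminorm τ r d = L2b := by rw [hgev d, hL2b_def]
  have hflip : ∀ k : Fin 3 → ℤ, (∑' j, a' j * b (k - j)) = ∑' j, b j * a' (k - j) := by
    intro k
    have h := (Equiv.subLeft k).tsum_eq (fun j => a' j * b (k - j))
    simp only [Equiv.subLeft_apply] at h
    rw [← h]
    exact tsum_congr fun j => by rw [show k - (k - j) = j by abel]; exact mul_comm _ _
  set C2 : ℝ≥0∞ := ENNReal.ofReal ((2:ℝ)^r) with hC2_def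
  rw [hgev (fconv c d), hgc, hgd]
  calc (∑' k, (W k * ENNReal.ofReal ‖fconv c d k‖) ^ (2:ℝ)) ^ (1/2:ℝ)
      ≤ (∑' k, (C2 * ((∑' j, a j * b' (k - j)) + ∑' j, a' j * b (k - j))) ^ (2:ℝ)) ^ (1/2:ℝ) :=
        ENNReal.rpow_le_rpow (ENNReal.tsum_le_tsum fun k =>
          ENNReal.rpow_le_rpow (hptwise k) (by norm_num)) (by norm_num)
    _ = C2 * (∑' k, ((∑' j, a j * b' (k - j)) + ∑' j, a' j * b (k - j)) ^ (2:ℝ)) ^ (1/2:ℝ) := by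
        rw [tsum_congr fun k => ENNReal.mul_rpow_of_nonneg _ _ (by norm_num : (0:ℝ) ≤ 2),
          ENNReal.tsum_mul_left, ENNReal.mul_rpow_of_nonneg _ _ (by norm_num : (0:ℝ) ≤ 1/2),
          sq_rpow_half]
    _ ≤ C2 * ((∑' k, (∑' j, a j * b' (k - j)) ^ (2:ℝ)) ^ (1/2:ℝ)
          + (∑' k, (∑' j, a' j * b (k - j)) ^ (2:ℝ)) ^ (1/2:ℝ)) :=
        mul_le_mul_right (tsum_L2_add _ _) _
    _ ≤ C2 * (L2a * (∑' j, b' j) + L2b * (∑' j, a' j)) := by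
        refine mul_le_mul_right (add_le_add ?_ ?_) _
        · rw [hL2a_def]
          exact tsum_young a b'
        · rw [hL2b_def]
          calc (∑' k, (∑' j, a' j * b (k - j)) ^ (2:ℝ)) ^ (1/2:ℝ)
              = (∑' k, (∑' j, b j * a' (k - j)) ^ (2:ℝ)) ^ (1/2:ℝ) := by
                rw [tsum_congr fun k => by rw [hflip k]]
            _ ≤ (∑' j, b j ^ (2:ℝ)) ^ (1/2:ℝ) * ∑' j, a' j := tsum_young b a'
    _ ≤ C2 * (L2a * (S2 * (ENNReal.ofReal ‖d 0‖ + L2b))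
          + L2b * (S2 * (ENNReal.ofReal ‖c 0‖ + L2a))) := by
        refine mul_le_mul_right (add_le_add ?_ ?_) _
        · refine mul_le_mul_right ?_ _
          have h := hL1 d
          rw [← hL2b_def] at h  -- fold L2b if needed
          exact h
        · refine mul_le_mul_right ?_ _
          have h := hL1 c
          rw [← hL2a_def] at h
          exact h
    _ ≤ C2 * (S2 * ((ENNReal.ofReal ‖c 0‖ + L2a) * (ENNReal.ofReal ‖d 0‖ + L2b))
          + S2 * ((ENNReal.ofReal ‖c 0‖ + L2a) * (ENNReal.ofReal ‖d 0‖ + L2b))) := by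
        refine mul_le_mul_right (add_le_add ?_ ?_) _
        · calc L2a * (S2 * (ENNReal.ofReal ‖d 0‖ + L2b))
              = S2 * (L2a * (ENNReal.ofReal ‖d 0‖ + L2b)) := by ring
            _ ≤ S2 * ((ENNReal.ofReal ‖c 0‖ + L2a) * (ENNReal.ofReal ‖d 0‖ + L2b)) :=
              mul_le_mul_right (mul_le_mul_left (self_le_add_left _ _) _) _
        · calc L2b * (S2 * (ENNReal.ofReal ‖c 0‖ + L2a))
              = S2 * ((ENNReal.ofReal ‖c 0‖ + L2a) * L2b) := by ring
            _ ≤ S2 * ((ENNReal.ofReal ‖c 0‖ + L2a) * (ENNReal.ofReal ‖d 0‖ + L2b)) :=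
              mul_le_mul_right (mul_le_mul_right (self_le_add_left _ _) _) _
    _ = (2 * C2 * S2) * ((ENNReal.ofReal ‖c 0‖ + L2a) * (ENNReal.ofReal ‖d 0‖ + L2b)) := by
        ring
    _ ≤ ENNReal.ofReal (2 * (2:ℝ)^r * (S2.toReal + 1))
          * ((ENNReal.ofReal ‖c 0‖ + L2a) * (ENNReal.ofReal ‖d 0‖ + L2b)) := by
        refine mul_le_mul_left ?_ _
        rw [ENNReal.ofReal_mul (by positivity), ENNReal.ofReal_mul (by norm_num)]
        have h1 : (2:ℝ≥0∞) = ENNReal.ofReal 2 := by norm_num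
        have h2 : S2 ≤ ENNReal.ofReal (S2.toReal + 1) := by
          calc S2 = ENNReal.ofReal S2.toReal := (ENNReal.ofReal_toReal hS2).symm
            _ ≤ ENNReal.ofReal (S2.toReal + 1) := ENNReal.ofReal_le_ofReal (by linarith)
        rw [hC2_def, ← h1]
        exact mul_le_mul' le_rfl h2
    _ = ENNReal.ofReal (2 * (2:ℝ)^r * (S2.toReal + 1)) * (ENNReal.ofReal ‖c 0‖ + L2a)
          * (ENNReal.ofReal ‖d 0‖ + L2b) := by ring

end main
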